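/- arXiv:2501.18217 — 5 statements merged into one kernel-verified Lean document; each statement's English description precedes it below -/
import Mathlib

section
/- Let Γ be a strongly regular graph with parameters (n,k,λ,μ) and let (x,y) be a 3-isoregular edge of Γ with associated parameters Q, R, W. Then λ(λ-Q-1) = R(k-λ-1). -/
open Finset

variable {V : Type*}

/-- The number of common neighbors of the three vertices `x, y, z` in `G`. -/
def commonValency [Fintype V] [DecidableEq V] (G : SimpleGraph V)
    [DecidableRel G.Adj] (x y z : V) : ℕ :=
  (G.neighborFinset x ∩ G.neighborFinset y ∩ G.neighborFinset z).card

/-- `(x,y)` is a 3-isoregular edge of `G` with associated parameters `Q, R, W`: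
the number of common neighbors of `{x,y,z}` equals `Q`, `R` or `W` according
to whether the induced subgraph on `{x,y,z}` is `K₃`, `K_{1,2}` or `K₂ + K₁`. -/
def IsoregEdgeWith [Fintype V] [DecidableEq V] (G : SimpleGraph V)
    [DecidableRel G.Adj] (x y : V) (Q R W : ℕ) : Prop :=
  G.Adj x y ∧
  (∀ z, z ≠ x → z ≠ y → G.Adj z x → G.Adj z y → commonValency G x y z = Q) ∧
  (∀ z, z ≠ x → z ≠ y → Xor' (G.Adj z x) (G.Adj z y) → commonValency G x y z = R) ∧
  (∀ z, z ≠ x → z ≠ y → ¬ G.Adj z x → ¬ G.Adj z y → commonValency G x y z = W)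

/-- `(x,z)` is a 3-isoregular non-edge of `G` with associated parameters
`R', W', V'`: the number of common neighbors of `{x,z,u}` equals `R'`, `W'`
or `V'` according to whether the induced subgraph on `{x,z,u}` is `K_{1,2}`,
`K₂ + K₁` or `3K₁`. -/
def IsoregNonEdgeWith [Fintype V] [DecidableEq V] (G : SimpleGraph V)
    [DecidableRel G.Adj] (x z : V) (R' W' V' : ℕ) : Prop :=
  x ≠ z ∧ ¬ G.Adj x z ∧
  (∀ u, u ≠ x → u ≠ z → G.Adj u x → G.Adj u z → commonValency G x z u = R') ∧
  (∀ u, u ≠ x → u ≠ z → Xor' (G.Adj u x) (G.Adj u z) → commonValency G x z u = W') ∧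
  (∀ u, u ≠ x → u ≠ z → ¬ G.Adj u x → ¬ G.Adj u z → commonValency G x z u = V')

/-! Let `A = Γ(x) ∩ Γ(y)` (of size `λ`) and `B = Γ(x) \ ({y} ∪ Γ(y))` (of size `k - λ - 1`).
A vertex `z ∈ A` has `λ` neighbours in `Γ(x)`: `y`, the `Q` common neighbours of `x, y, z`, and
`λ - Q - 1` vertices of `B`. A vertex `w ∈ B` has exactly `R` neighbours in `A`, namely the
common neighbours of `x, y, w`. Counting the edges between `A` and `B` both ways gives the identity.
-/

theorem Finset.card_erase_sdiff_add_one_add_card_inter {α : Type*} [DecidableEq α]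
    {s t : Finset α} {a : α} (has : a ∈ s) (hat : a ∉ t) :
    #((s \ t).erase a) + 1 + #(s ∩ t) = #s := by
  rw [card_erase_add_one (mem_sdiff.2 ⟨has, hat⟩), card_sdiff_add_card_inter]

namespace SimpleGraph

variable [Fintype V] [DecidableEq V] (G : SimpleGraph V) [DecidableRel G.Adj]

theorem card_commonNeighbors_eq_card_neighborFinset_inter (v w : V) :
    Fintype.card (G.commonNeighbors v w) = #(G.neighborFinset v ∩ G.neighborFinset w) := by
  rw [← Set.toFinset_card]
  congr 1
  ext
  simp [mem_commonNeighbors]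

/-- For an edge `xy` this is the set `D^2_1` of the paper. -/
def exclusiveNeighborFinset (x y : V) : Finset V :=
  (G.neighborFinset x \ G.neighborFinset y).erase y

variable {G} {x y : V}

@[simp]
theorem mem_exclusiveNeighborFinset {w : V} :
    w ∈ G.exclusiveNeighborFinset x y ↔ w ≠ y ∧ G.Adj x w ∧ ¬G.Adj y w := by
  simp [exclusiveNeighborFinset]

theorem Adj.card_exclusiveNeighborFinset_add_one_add_card_inter (hxy : G.Adj x y) :
    #(G.exclusiveNeighborFinset x y) + 1 + #(G.neighborFinset x ∩ G.neighborFinset y) =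
      G.degree x := by
  rw [← card_neighborFinset_eq_degree]
  exact card_erase_sdiff_add_one_add_card_inter (by simpa) (by simp)

theorem card_filter_adj_exclusiveNeighborFinset_add_one_add_commonValency {z : V}
    (hxy : G.Adj x y) (hzy : G.Adj z y) :
    #{w ∈ G.exclusiveNeighborFinset x y | G.Adj z w} + 1 + commonValency G x y z =
      #(G.neighborFinset x ∩ G.neighborFinset z) := by
  have hfilter : {w ∈ G.exclusiveNeighborFinset x y | G.Adj z w} =
      ((G.neighborFinset x ∩ G.neighborFinset z) \ G.neighborFinset y).erase y := by
    ext u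
    simp only [mem_filter, mem_exclusiveNeighborFinset, mem_erase, mem_sdiff, mem_inter,
      mem_neighborFinset]
    tauto
  have hcommon : commonValency G x y z =
      #((G.neighborFinset x ∩ G.neighborFinset z) ∩ G.neighborFinset y) := by
    rw [commonValency, inter_right_comm]
  rw [hfilter, hcommon]
  exact card_erase_sdiff_add_one_add_card_inter (by simp [hxy, hzy]) (by simp)

theorem card_filter_adj_neighborFinset_inter {w : V} :
    #{z ∈ G.neighborFinset x ∩ G.neighborFinset y | G.Adj z w} = commonValency G x y w := by
  congr 1
  ext u
  simp [adj_comm G u w, and_assoc]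

theorem IsSRGWith.card_neighborFinset_inter_of_adj {n k ℓ μ : ℕ} {v w : V}
    (h : G.IsSRGWith n k ℓ μ) (hvw : G.Adj v w) :
    #(G.neighborFinset v ∩ G.neighborFinset w) = ℓ := by
  rw [← G.card_commonNeighbors_eq_card_neighborFinset_inter, h.of_adj v w hvw]

end SimpleGraph

/-- For a 3-isoregular edge `(x,y)` of an `(n,k,λ,μ)`-strongly
regular graph with associated parameters `Q,R,W`, we have
`λ(λ-Q-1) = R(k-λ-1)`. -/
theorem isoreg_edge_eq1 [Fintype V] [DecidableEq V] (G : SimpleGraph V)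
    [DecidableRel G.Adj] (n k lam mu : ℕ) (h : G.IsSRGWith n k lam mu)
    (x y : V) (Q R W : ℕ) (hxy : IsoregEdgeWith G x y Q R W) :
    (lam : ℤ) * (lam - Q - 1) = R * (k - lam - 1) := by
  obtain ⟨hadj, hQ, hR, -⟩ := hxy
  set A := G.neighborFinset x ∩ G.neighborFinset y
  set B := G.exclusiveNeighborFinset x y
  have hA : #A = lam := h.card_neighborFinset_inter_of_adj hadj
  have hB : #B + 1 + lam = k := by
    rw [← hA, ← h.regular.degree_eq x]
    exact hadj.card_exclusiveNeighborFinset_add_one_add_card_inter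
  have hAbove : ∀ z ∈ A, (#(B.bipartiteAbove G.Adj z) : ℤ) = lam - Q - 1 := by
    intro z hz
    obtain ⟨hxz, hyz⟩ : G.Adj x z ∧ G.Adj y z := by simpa [A] using hz
    have hsplit : #{w ∈ B | G.Adj z w} + 1 + Q = lam := by
      rw [← hQ z hxz.ne' hyz.ne' hxz.symm hyz.symm, ← h.card_neighborFinset_inter_of_adj hxz]
      exact SimpleGraph.card_filter_adj_exclusiveNeighborFinset_add_one_add_commonValency hadj
        hyz.symm
    rw [bipartiteAbove]
    omega
  have hBelow : ∀ w ∈ B, #(A.bipartiteBelow G.Adj w) = R := by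
    intro w hw
    obtain ⟨hwy, hxw, hyw⟩ := SimpleGraph.mem_exclusiveNeighborFinset.1 hw
    rw [bipartiteBelow, SimpleGraph.card_filter_adj_neighborFinset_inter]
    exact hR w hxw.ne' hwy (Or.inl ⟨hxw.symm, fun hwy' => hyw hwy'.symm⟩)
  calc (lam : ℤ) * (lam - Q - 1) = ∑ z ∈ A, (#(B.bipartiteAbove G.Adj z) : ℤ) := by
        rw [sum_congr rfl hAbove, sum_const, hA, nsmul_eq_mul]
    _ = ∑ w ∈ B, (#(A.bipartiteBelow G.Adj w) : ℤ) := by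
        exact_mod_cast sum_card_bipartiteAbove_eq_sum_card_bipartiteBelow G.Adj
    _ = R * (k - lam - 1) := by
        rw [sum_congr rfl fun w hw => congrArg Nat.cast (hBelow w hw), sum_const, nsmul_eq_mul,
          ← hB]
        push_cast
        ring
end

section
/- For a strongly regular graph Γ with valency k and smallest eigenvalue -m (m > 0), every clique C of Γ satisfies |C| ≤ 1 + k/m. -/
/-!
An eigenvector of `A = G.adjMatrix ℝ` for `-m ≠ k` is orthogonal to the all-ones vector, so the
identity `A² = (k - μ) I + (ℓ - μ) A + μ J` makes `-m` a root of `x² - (ℓ - μ) x - (k - μ)`;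
the other root is `r = (k - μ) / m ≥ 0`. Then `N = (k + m) (r I - A) + μ J` satisfies
`N² = (k + m) (r + m) N`, so `N` is positive semidefinite (a positive multiple of the projection
onto the `-m`-eigenspace). Its quadratic form at the characteristic vector of a clique of size `c`
equals `c (1 + r) (k + m - m c)`, whence `m c ≤ k + m`.
-/

open Matrix Finset
open scoped ComplexOrder

namespace Matrix

variable {ι : Type*} [Fintype ι]

theorem exists_mulVec_eq_smul_of_mem_spectrum [DecidableEq ι] {K : Type*} [Field K]
    {A : Matrix ι ι K} {θ : K} (hθ : θ ∈ spectrum K A) : ∃ v ≠ 0, A *ᵥ v = θ • v := by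
  rw [← spectrum_toLin', ← Module.End.hasEigenvalue_iff_mem_spectrum] at hθ
  obtain ⟨v, hv⟩ := hθ.exists_hasEigenvector
  exact ⟨v, hv.2, by simpa using hv.apply_eq_smul⟩

theorem PosSemidef.of_mul_self_eq_smul {𝕜 : Type*} [RCLike 𝕜] {N : Matrix ι ι 𝕜} {c : 𝕜}
    (hN : N.IsHermitian) (hNN : N * N = c • N) (hc : 0 < c) : N.PosSemidef := by
  have : N = c⁻¹ • (Nᴴ * N) := by rw [hN.eq, hNN, smul_smul, inv_mul_cancel₀ hc.ne', one_smul]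
  rw [this]
  exact (posSemidef_conjTranspose_mul_self N).smul (inv_nonneg.mpr hc.le)

theorem indicator_dotProduct_mulVec_indicator {α : Type*} [NonAssocSemiring α]
    (M : Matrix ι ι α) (s : Finset ι) :
    (s : Set ι).indicator 1 ⬝ᵥ M *ᵥ (s : Set ι).indicator 1 = ∑ i ∈ s, ∑ j ∈ s, M i j := by
  classical
  simp [dotProduct, mulVec, Set.indicator_apply, ite_mul, mul_ite, sum_ite_mem]

end Matrix

namespace SimpleGraph

variable {V α : Type*} {G : SimpleGraph V} [DecidableRel G.Adj]

theorem compl_adjMatrix_eq_of_one_sub [DecidableEq V] [AddGroupWithOne α] :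
    Gᶜ.adjMatrix α = of 1 - 1 - G.adjMatrix α := by
  ext i j
  by_cases hij : i = j
  · subst hij; simp
  · by_cases hadj : G.Adj i j <;> simp [hij, hadj, one_apply_ne hij]

theorem IsClique.adjMatrix_apply [DecidableEq V] [AddGroupWithOne α] {s : Set V}
    (hs : G.IsClique s) {i j : V} (hi : i ∈ s) (hj : j ∈ s) :
    G.adjMatrix α i j = (of 1 - 1 : Matrix V V α) i j := by
  by_cases hij : i = j
  · simp [hij]
  · simp [hs hi hj hij, one_apply_ne hij]

variable [Fintype V] {n k ℓ μ : ℕ}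

theorem IsClique.indicator_dotProduct_adjMatrix_mulVec_indicator [DecidableEq V] [Ring α]
    {s : Finset V} (hs : G.IsClique (s : Set V)) :
    (s : Set V).indicator 1 ⬝ᵥ G.adjMatrix α *ᵥ (s : Set V).indicator 1 = #s * #s - #s := by
  rw [indicator_dotProduct_mulVec_indicator]
  calc ∑ i ∈ s, ∑ j ∈ s, G.adjMatrix α i j
      = ∑ i ∈ s, ∑ j ∈ s, (of 1 - 1 : Matrix V V α) i j :=
        sum_congr rfl fun i hi => sum_congr rfl fun j hj => hs.adjMatrix_apply hi hj
    _ = #s * #s - #s := by simp [one_apply, sum_sub_distrib]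

theorem IsRegularOfDegree.adjMatrix_mul_of_one [NonAssocSemiring α] (hG : G.IsRegularOfDegree k) :
    G.adjMatrix α * of 1 = (k : α) • of 1 := by
  ext i j
  simp [adjMatrix_mul_apply, hG i]

theorem IsRegularOfDegree.of_one_mul_adjMatrix [NonAssocSemiring α] (hG : G.IsRegularOfDegree k) :
    of 1 * G.adjMatrix α = (k : α) • of 1 := by
  ext i j
  simp [mul_adjMatrix_apply, hG j]

theorem IsRegularOfDegree.sum_eq_zero_of_mulVec_eq_smul [Field α] (hG : G.IsRegularOfDegree k)
    {v : V → α} {θ : α} (hv : G.adjMatrix α *ᵥ v = θ • v) (hθ : θ ≠ k) : ∑ i, v i = 0 := by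
  have h1 : 1 ᵥ* G.adjMatrix α = (k : α) • 1 := by
    ext j
    simp [adjMatrix_vecMul_apply, hG j]
  have h2 : θ * ∑ i, v i = k * ∑ i, v i := by
    have := dotProduct_mulVec 1 (G.adjMatrix α) v
    simpa [hv, h1, dotProduct_smul, smul_dotProduct, one_dotProduct] using this
  exact (mul_eq_mul_right_iff.mp h2).resolve_left hθ

theorem IsSRGWith.exists_le_degree (h : G.IsSRGWith n k ℓ μ) :
    ∃ μ' ≤ k, G.IsSRGWith n k ℓ μ' := by
  by_cases hG : ∃ v w, v ≠ w ∧ ¬G.Adj v w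
  · obtain ⟨v, w, hvw, hadj⟩ := hG
    refine ⟨μ, ?_, h⟩
    rw [← h.of_not_adj hvw hadj, ← h.regular v]
    exact G.card_commonNeighbors_le_degree_left v w
  · push Not at hG
    exact ⟨0, k.zero_le, { h with of_not_adj := fun v w hvw hadj => absurd (hG v w hvw) hadj }⟩

variable [DecidableEq V]

theorem IsSRGWith.adjMatrix_mul_self [CommRing α] (h : G.IsSRGWith n k ℓ μ) :
    G.adjMatrix α * G.adjMatrix α =
      ((k : α) - μ) • 1 + ((ℓ : α) - μ) • G.adjMatrix α + (μ : α) • of 1 := by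
  rw [← sq, h.matrix_eq, compl_adjMatrix_eq_of_one_sub]
  simp only [← Nat.cast_smul_eq_nsmul α]
  module

theorem IsSRGWith.mul_self_eq_of_mulVec_eq_smul [Field α] (h : G.IsSRGWith n k ℓ μ)
    {v : V → α} {θ : α} (hv0 : v ≠ 0) (hv : G.adjMatrix α *ᵥ v = θ • v) (hθ : θ ≠ k) :
    θ * θ = ((k : α) - μ) + ((ℓ : α) - μ) * θ := by
  have hJv : (of 1 : Matrix V V α) *ᵥ v = 0 := by
    ext i
    simp [mulVec, dotProduct, h.regular.sum_eq_zero_of_mulVec_eq_smul hv hθ]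
  have hAAv := congrArg (· *ᵥ v) (h.adjMatrix_mul_self (α := α))
  simp only [← mulVec_mulVec, hv, mulVec_smul, add_mulVec, smul_mulVec, one_mulVec, hJv,
    smul_zero, add_zero, smul_smul, ← add_smul] at hAAv
  obtain ⟨i, hi⟩ : ∃ i, v i ≠ 0 := Function.ne_iff.mp hv0
  simpa [hi] using congrFun hAAv i

theorem IsSRGWith.cast_param_eq [CommRing α] [Nonempty V] (h : G.IsSRGWith n k ℓ μ) :
    (k : α) * k = ((k : α) - μ) + ((ℓ : α) - μ) * k + n * μ := by
  have hA1 : G.adjMatrix α *ᵥ 1 = (k : α) • 1 := by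
    ext i
    simp [adjMatrix_mulVec_apply, h.regular i]
  have hJ1 : (of 1 : Matrix V V α) *ᵥ (1 : V → α) = (n : α) • 1 := by
    ext i
    simp [mulVec, dotProduct, h.card]
  have hAA1 := congrArg (· *ᵥ (1 : V → α)) (h.adjMatrix_mul_self (α := α))
  simp only [← mulVec_mulVec, hA1, mulVec_smul, add_mulVec, smul_mulVec, one_mulVec, hJ1,
    smul_smul, ← add_smul] at hAA1
  obtain ⟨i⟩ := ‹Nonempty V›
  linear_combination (by simpa using congrFun hAA1 i : (k : α) * k = _)

theorem IsSRGWith.posSemidef_smul_sub_adjMatrix_add [Nonempty V] (h : G.IsSRGWith n k ℓ μ)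
    {r m : ℝ} (hm : 0 < m) (hr : 0 ≤ r) (hrm : r * m = k - μ) (hr_sub : r - m = ℓ - μ) :
    (((k : ℝ) + m) • (r • 1 - G.adjMatrix ℝ) + (μ : ℝ) • of 1).PosSemidef := by
  set A := G.adjMatrix ℝ
  set J : Matrix V V ℝ := of 1
  have hAA : A * A = (r * m) • 1 + (r - m) • A + (μ : ℝ) • J := by
    rw [h.adjMatrix_mul_self, hrm, hr_sub]
  have hnμ : (n : ℝ) * μ = (k - r) * (k + m) := by
    linear_combination (-1 : ℝ) * h.cast_param_eq (α := ℝ) + hrm + (k : ℝ) * hr_sub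
  have hAJ : A * J = (k : ℝ) • J := h.regular.adjMatrix_mul_of_one
  have hJA : J * A = (k : ℝ) • J := h.regular.of_one_mul_adjMatrix
  have hJJ : J * J = (n : ℝ) • J := by
    ext i j
    simp [J, mul_apply, h.card]
  refine PosSemidef.of_mul_self_eq_smul ?_ (c := ((k : ℝ) + m) * (r + m)) ?_ (by positivity)
  · ext i j
    simp [A, J, G.adj_comm, one_apply, eq_comm]
  · simp only [add_mul, mul_add, sub_mul, mul_sub, smul_mul_assoc, mul_smul_comm,
      one_mul, mul_one, hAA, hAJ, hJA, hJJ]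
    linear_combination (norm := module) ((μ : ℝ) * hnμ) • J

theorem IsSRGWith.card_le_of_isClique (h : G.IsSRGWith n k ℓ μ) {r m : ℝ} (hm : 0 < m)
    (hr : 0 ≤ r) (hrm : r * m = k - μ) (hr_sub : r - m = ℓ - μ) {C : Finset V}
    (hC : G.IsClique (C : Set V)) : (#C : ℝ) ≤ 1 + k / m := by
  rcases C.eq_empty_or_nonempty with rfl | hCne
  · simp only [card_empty, Nat.cast_zero]
    positivity
  have : Nonempty V := ⟨hCne.choose⟩
  have hc : 0 < (#C : ℝ) := by exact_mod_cast hCne.card_pos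
  have hx := (h.posSemidef_smul_sub_adjMatrix_add hm hr hrm hr_sub).dotProduct_mulVec_nonneg
    ((C : Set V).indicator 1)
  simp only [star_trivial, add_mulVec, smul_mulVec, sub_mulVec, dotProduct_add,
    dotProduct_smul, dotProduct_sub, hC.indicator_dotProduct_adjMatrix_mulVec_indicator] at hx
  simp only [indicator_dotProduct_mulVec_indicator, one_apply, of_apply, Pi.one_apply, sum_ite_eq,
    sum_ite_mem, inter_self, sum_const, nsmul_eq_mul, mul_one, smul_eq_mul] at hx
  have hP : 0 < (#C : ℝ) * m * (1 + r) := by positivity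
  have hPQ : (#C : ℝ) * m * (1 + r) * (k + m - m * #C) =
      m * ((k + m) * (r * #C - (#C * #C - #C)) + μ * (#C * #C)) := by
    linear_combination (-(#C : ℝ) * #C * m) * hrm
  have hQ : m * #C ≤ k + m := by
    have := (mul_nonneg_iff_of_pos_left hP).mp (hPQ ▸ mul_nonneg hm.le hx)
    linarith
  calc (#C : ℝ) ≤ (k + m) / m := by rwa [le_div_iff₀ hm, mul_comm]
    _ = 1 + k / m := by rw [add_div, div_self hm.ne', add_comm]

end SimpleGraph

theorem hoffman_clique_bound_general {V : Type*} [Fintype V] [DecidableEq V]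
    (G : SimpleGraph V) [DecidableRel G.Adj] (n k lam mu : ℕ)
    (h : G.IsSRGWith n k lam mu)
    (m : ℝ) (hm : 0 < m)
    (hmin : -m ∈ spectrum ℝ (G.adjMatrix ℝ))
    (C : Finset V) (hC : G.IsClique (C : Set V)) :
    (C.card : ℝ) ≤ 1 + k / m := by
  obtain ⟨v, hv0, hv⟩ := exists_mulVec_eq_smul_of_mem_spectrum hmin
  -- `mu' ≤ k` makes the second root `(k - mu') / m` of the quadratic below nonnegative.
  obtain ⟨mu', hmu', h'⟩ := h.exists_le_degree
  have hquad := h'.mul_self_eq_of_mulVec_eq_smul hv0 hv (by linarith [k.cast_nonneg (α := ℝ)])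
  refine h'.card_le_of_isClique hm (r := (k - mu') / m) (div_nonneg (by simpa using hmu') hm.le)
    (div_mul_cancel₀ _ hm.ne') ?_ hC
  field_simp
  linear_combination -hquad

/-- Hoffman clique bound: If `Γ` is a connected
`(n,k,λ,μ)`-strongly regular graph whose adjacency matrix has smallest
eigenvalue `-m` with `m > 0`, then every clique `C` satisfies
`|C| ≤ 1 + k/m`. -/
theorem hoffman_clique_bound {V : Type*} [Fintype V] [DecidableEq V]
    (G : SimpleGraph V) [DecidableRel G.Adj] (n k lam mu : ℕ)
    (h : G.IsSRGWith n k lam mu) (hconn : G.Connected)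
    (m : ℝ) (hm : 0 < m)
    (hmin : -m ∈ spectrum ℝ (G.adjMatrix ℝ))
    (hleast : ∀ t ∈ spectrum ℝ (G.adjMatrix ℝ), -m ≤ t)
    (C : Finset V) (hC : G.IsClique (C : Set V)) :
    (C.card : ℝ) ≤ 1 + k / m :=
  hoffman_clique_bound_general G n k lam mu h m hm hmin C hC
end

section
/- Let m ≥ 3 be odd. There do not exist nonnegative integers Q, R, W, V satisfying: mQ = m(m²-m-1)-(m+1)R, mW = m(m-1)² - (m-1)R, (m+2)V = m(m-2) + mR, R ≤ m²-m, and mQ ≥ 0. -/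
/-!
Cancelling `m` in the identity for `Q` shows `m ∣ R`; write `R = α m`. Then
`Q = m² - m - 1 - (m + 1) α ≥ 0` forces `0 ≤ α ≤ m - 2`. The identity for `V` gives
`m + 2 ∣ 2 m (α + 2)`, and since `m` is odd, `m + 2` is coprime to `2 m`, so
`m + 2 ∣ α + 2`. But `0 < α + 2 ≤ m < m + 2`.
-/

theorem Int.isCoprime_add_two_two_mul {m : ℤ} (hm : Odd m) : IsCoprime (m + 2) (2 * m) := by
  obtain ⟨k, rfl⟩ := hm
  exact IsCoprime.mul_right ⟨1, -(k + 1), by ring⟩ ⟨-k, k + 1, by ring⟩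

namespace FamilyB

variable {m : ℤ}

theorem dvd_of_mul_eq_mul_sub_add_one_mul {Q R c : ℤ} (h : m * Q = m * c - (m + 1) * R) :
    m ∣ R :=
  ⟨c - Q - R, by linear_combination h⟩

theorem le_sub_two_of_nonneg {Q α : ℤ} (hm : 0 < m) (hQ : 0 ≤ Q)
    (h : m * Q = m * (m ^ 2 - m - 1) - (m + 1) * (m * α)) : α ≤ m - 2 := by
  have hQ_eq : Q = m ^ 2 - m - 1 - (m + 1) * α :=
    mul_left_cancel₀ hm.ne' (by linear_combination h)
  nlinarith

theorem add_two_dvd_add_two {V α : ℤ} (hm : Odd m)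
    (h : (m + 2) * V = m * (m - 2) + m * (m * α)) : m + 2 ∣ α + 2 :=
  (Int.isCoprime_add_two_two_mul hm).dvd_of_dvd_mul_left
    ⟨m * (α + 1) - V, by linear_combination h⟩

end FamilyB

open FamilyB in
/-- For odd `m ≥ 3` there are no nonnegative integers
`Q, R, W, V` satisfying the parameter identities of family (b) of strongly
regular bicirculants with parameters `(4m², 2m²-m, m²-m, m²-m)`. -/
theorem no_family_b_params (m : ℤ) (hodd : Odd m) (hm : 3 ≤ m) :
    ¬ ∃ Q R W V : ℤ, 0 ≤ Q ∧ 0 ≤ R ∧ 0 ≤ W ∧ 0 ≤ V ∧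
      m * Q = m * (m ^ 2 - m - 1) - (m + 1) * R ∧
      m * W = m * (m - 1) ^ 2 - (m - 1) * R ∧
      (m + 2) * V = m * (m - 2) + m * R ∧
      R ≤ m ^ 2 - m ∧ 0 ≤ m * Q := by
  rintro ⟨Q, R, -, V, hQ, hR, -, -, hQ_eq, -, hV_eq, -, -⟩
  have hm_pos : 0 < m := by omega
  obtain ⟨α, rfl⟩ := dvd_of_mul_eq_mul_sub_add_one_mul hQ_eq
  have hα_nonneg : 0 ≤ α := nonneg_of_mul_nonneg_right hR hm_pos
  have hα_le : α ≤ m - 2 := le_sub_two_of_nonneg hm_pos hQ hQ_eq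
  have hdvd_le : m + 2 ≤ α + 2 := Int.le_of_dvd (by omega) (add_two_dvd_add_two hodd hV_eq)
  omega
end

section
/- Let s be an integer with s ∉ {-1,0,1}. There do not exist nonnegative integers Q, R, W such that R = (s²+s-1)(s²+s-Q-2)/(2(s-1)s) and W = -(α-1)s(s²+s-1)/(2s-1), where R = α(s²+s-1), except in the case α = 1, which forces s = 2; i.e., no strongly regular graph with parameters (3(3s²-3s+1), s(3s-1), s²+s-1, s²) has a 3-isoregular edge, except for s = 2 (the triangular graph T(7)). -/
/-- Let `s ∉ {-1,0,1}`. If nonnegative integers `Q, R, W`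
satisfy the 3-isoregular-edge identities for a strongly regular graph with
parameters `(3(3s²-3s+1), s(3s-1), s²+s-1, s²)` — written out via the integer
`α` with `R = α(s²+s-1)`, `Q = s²+s-2-2αs(s-1)` and
`(2s-1)W = -(α-1)s(s²+s-1)` — then necessarily `s = 2` and `α = 1`
(the triangular graph `T(7)`); in particular no such `Q,R,W` exist for
`s ≠ 2`. -/
theorem tricirc_family2_edge (s Q R W a : ℤ)
    (h1 : s ≠ -1) (h2 : s ≠ 0) (h3 : s ≠ 1)
    (hQ : 0 ≤ Q) (hR : 0 ≤ R) (hW : 0 ≤ W)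
    (hRa : R = a * (s ^ 2 + s - 1))
    (hQa : Q = s ^ 2 + s - 2 - 2 * a * s * (s - 1))
    (hWa : (2 * s - 1) * W = -(a - 1) * s * (s ^ 2 + s - 1)) :
    s = 2 ∧ a = 1 := by
  have hs2 : s ≤ -2 ∨ 2 ≤ s := by omega
  have hpos : 0 < s ^ 2 + s - 1 := by
    rcases hs2 with h | h <;> nlinarith
  have ha0 : 0 ≤ a := by nlinarith [hR, hRa]
  have ha1 : a ≤ 1 := by
    rcases hs2 with h | h
    · -- s ≤ -2 : 2s-1 < 0, so (2s-1)*W ≤ 0, hence (a-1)*s*(s²+s-1) ≥ 0, s<0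
      nlinarith [hWa, mul_pos (show (0:ℤ) < -s by linarith) hpos,
        mul_nonneg hW (show (0:ℤ) ≤ 1 - 2*s by linarith)]
    · nlinarith [hWa, mul_pos (show (0:ℤ) < s by linarith) hpos,
        mul_nonneg hW (show (0:ℤ) ≤ 2*s - 1 by linarith)]
  interval_cases a
  · -- a = 0 : divisibility contradiction
    exfalso
    have hdvd : (2*s - 1) ∣ 1 := ⟨4*s^2 + 6*s - 1 - 8*W, by linear_combination 8*hWa⟩
    have := Int.isUnit_iff.mp (isUnit_of_dvd_one hdvd)
    omega
  · -- a = 1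
    refine ⟨?_, rfl⟩
    have hkey : (s - 1) * (s - 2) ≤ 0 := by nlinarith [hQ, hQa]
    rcases hs2 with h | h
    · nlinarith
    · nlinarith
end

section
/- Let s be a nonzero integer, and suppose Q, R, W are nonnegative integers satisfying 4(2s+1)R = (4s+3)(4s²+3s-Q-1) and the relation (2s+1)W = s(s-α)(4s+3) where R = α(4s+3) and Q = 4s²+3s-1-4α(2s+1) for an integer α. Then, writing α = s - β(2s+1), one has W = βs(4s+3) and R = -(4s+3)(2βs-s+β), and the constraints Q,R,W ≥ 0 force s = -1 (with β = 1). -/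
/-!
Substituting `α = s - β(2s+1)` turns the three parameters into
`W = βs(4s+3)`, `R = (4s+3)(s - β(2s+1))` and `Q = 4β(2s+1)² - (4s²+s+1)`.
Since `s(4s+3) > 0` and `4s²+s+1 > 0` for every nonzero integer `s`, `W ≥ 0` and `Q ≥ 0`
force `β ≥ 1`; then `R ≥ 0` is impossible for `s ≥ 0`, and for `s ≤ -1` it gives
`s ≤ β(2s+1) ≤ 2s+1`, i.e. `s = -1`, after which `R = 1 - β` forces `β = 1`.
-/

namespace Tricirculant

lemma mul_four_mul_add_three_pos {s : ℤ} (hs : s ≠ 0) : 0 < s * (4 * s + 3) := by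
  rcases hs.lt_or_gt with h | h <;> nlinarith

lemma one_le_of_nonneg_mul_of_nonneg_sub {s b : ℤ} (hs : s ≠ 0) (hW : 0 ≤ b * s * (4 * s + 3))
    (hQ : 0 ≤ 4 * b * (2 * s + 1) ^ 2 - (4 * s ^ 2 + s + 1)) : 1 ≤ b := by
  have hb : 0 ≤ b :=
    nonneg_of_mul_nonneg_left (by rwa [← mul_assoc]) (mul_four_mul_add_three_pos hs)
  have hb0 : b ≠ 0 := by
    rintro rfl
    nlinarith [sq_nonneg (8 * s + 1)]
  omega

lemma eq_neg_one_of_one_le_of_nonneg_mul {s b : ℤ} (hb : 1 ≤ b)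
    (hR : 0 ≤ (4 * s + 3) * (s - b * (2 * s + 1))) : s = -1 := by
  rcases le_or_gt 0 s with h | h
  · have : s - b * (2 * s + 1) < 0 := by nlinarith
    nlinarith
  · have hle : s ≤ b * (2 * s + 1) := by nlinarith
    have : b * (2 * s + 1) ≤ 2 * s + 1 := by nlinarith
    omega

end Tricirculant

open Tricirculant in
theorem tricirc_family1_edge_general (s Q R W a b : ℤ) (hs : s ≠ 0)
    (hQ : 0 ≤ Q) (hR : 0 ≤ R) (hW : 0 ≤ W)
    (hRa : R = a * (4 * s + 3))
    (hQa : Q = 4 * s ^ 2 + 3 * s - 1 - 4 * a * (2 * s + 1))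
    (hWa : (2 * s + 1) * W = s * (s - a) * (4 * s + 3))
    (hab : a = s - b * (2 * s + 1)) :
    W = b * s * (4 * s + 3) ∧ R = -(4 * s + 3) * (2 * b * s - s + b) ∧
      s = -1 ∧ b = 1 := by
  subst hab
  have hW' : W = b * s * (4 * s + 3) :=
    mul_left_cancel₀ (by omega : 2 * s + 1 ≠ 0) (by rw [hWa]; ring)
  have hR' : R = -(4 * s + 3) * (2 * b * s - s + b) := by rw [hRa]; ring
  have hb : 1 ≤ b :=
    one_le_of_nonneg_mul_of_nonneg_sub hs (hW' ▸ hW) (by rw [hQa] at hQ; linarith)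
  have hs' : s = -1 := eq_neg_one_of_one_le_of_nonneg_mul hb (by rw [hRa] at hR; linarith)
  subst hs'
  exact ⟨hW', hR', rfl, by linarith⟩

/-- Let `s` be a nonzero integer and suppose nonnegative
integers `Q, R, W` satisfy `4(2s+1)R = (4s+3)(4s²+3s-Q-1)` and
`(2s+1)W = s(s-α)(4s+3)`, where `R = α(4s+3)`,
`Q = 4s²+3s-1-4α(2s+1)` and `α = s - β(2s+1)` for integers `α, β`. Then
`W = βs(4s+3)`, `R = -(4s+3)(2βs-s+β)`, and the nonnegativity constraints
force `s = -1` and `β = 1`. -/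
theorem tricirc_family1_edge (s Q R W a b : ℤ) (hs : s ≠ 0)
    (hQ : 0 ≤ Q) (hR : 0 ≤ R) (hW : 0 ≤ W)
    (h1 : 4 * (2 * s + 1) * R = (4 * s + 3) * (4 * s ^ 2 + 3 * s - Q - 1))
    (hRa : R = a * (4 * s + 3))
    (hQa : Q = 4 * s ^ 2 + 3 * s - 1 - 4 * a * (2 * s + 1))
    (hWa : (2 * s + 1) * W = s * (s - a) * (4 * s + 3))
    (hab : a = s - b * (2 * s + 1)) :
    W = b * s * (4 * s + 3) ∧ R = -(4 * s + 3) * (2 * b * s - s + b) ∧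
      s = -1 ∧ b = 1 :=
  tricirc_family1_edge_general s Q R W a b hs hQ hR hW hRa hQa hWa hab
end
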